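/- Every element of the minimal Martin space ℳᵐ is harmonic, i.e. every w ∈ ℳᵐ satisfies w_i = sup_{j ∈ S} (A_{ij} + w_j) for all i ∈ S. -/

import Mathlib

open Filter Topology

noncomputable section

namespace MaxPlus

variable {S : Type*}

/-- Weight of the path `p 0, p 1, ..., p n` for the kernel `A`. -/
def pathWeight (A : S → S → EReal) (p : ℕ → S) (n : ℕ) : EReal :=
  ∑ k ∈ Finset.range n, A (p k) (p (k + 1))

/-- The max-plus star kernel `A*`: supremum of weights of paths of length `≥ 0`. -/
def star (A : S → S → EReal) (i j : S) : EReal :=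
  ⨆ (n : ℕ) (p : ℕ → S) (_ : p 0 = i ∧ p n = j), pathWeight A p n

/-- The max-plus kernel `A⁺`: supremum of weights of paths of length `≥ 1`. -/
def plus (A : S → S → EReal) (i j : S) : EReal :=
  ⨆ (n : ℕ) (_ : 1 ≤ n) (p : ℕ → S) (_ : p 0 = i ∧ p n = j), pathWeight A p n

/-- `π` is a left super-harmonic row vector (with full support, being real valued). -/
def LeftSuperharmonic (A : S → S → EReal) (π : S → ℝ) : Prop :=
  ∀ j, (⨆ i, ((π i : EReal) + A i j)) ≤ (π j : EReal)

/-- The Martin kernel `K_{ij} = A*_{ij} - π_j`. -/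
def K (A : S → S → EReal) (π : S → ℝ) (i j : S) : EReal :=
  star A i j - (π j : EReal)

/-- `K♭_{ij} = A⁺_{ij} - π_j`. -/
def Kflat (A : S → S → EReal) (π : S → ℝ) (i j : S) : EReal :=
  plus A i j - (π j : EReal)

/-- The set `𝒦` of columns of the Martin kernel. -/
def kerCols (A : S → S → EReal) (π : S → ℝ) : Set (S → EReal) :=
  Set.range fun j => fun i => K A π i j

/-- The Martin space `ℳ`: closure of `𝒦` in the product topology. -/
def martin (A : S → S → EReal) (π : S → ℝ) : Set (S → EReal) :=
  closure (kerCols A π)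

/-- `μ_u(w)`: the limsup of `π_j + u_j` as `K_{·j} → w`. -/
def mu (A : S → S → EReal) (π : S → ℝ) (u : S → EReal) (w : S → EReal) : EReal :=
  ⨅ (W : Set (S → EReal)) (_ : W ∈ 𝓝 w),
    ⨆ (j : S) (_ : (fun i => K A π i j) ∈ W), ((π j : EReal) + u j)

/-- `w♭_i`: the liminf of `K♭_{ij}` as `K_{·j} → w`. -/
def flat (A : S → S → EReal) (π : S → ℝ) (w : S → EReal) (i : S) : EReal :=
  ⨆ (W : Set (S → EReal)) (_ : W ∈ 𝓝 w),
    ⨅ (j : S) (_ : (fun i' => K A π i' j) ∈ W), Kflat A π i j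

/-- The kernel `H(z,w) = μ_w(z)`. -/
def H (A : S → S → EReal) (π : S → ℝ) (z w : S → EReal) : EReal := mu A π w z

/-- The kernel `H♭(z,w) = μ_{w♭}(z)`. -/
def Hflat (A : S → S → EReal) (π : S → ℝ) (z w : S → EReal) : EReal :=
  mu A π (flat A π w) z

/-- The minimal Martin space `ℳᵐ = {w ∈ ℳ : H♭(w,w) = 0}`. -/
def martinMin (A : S → S → EReal) (π : S → ℝ) : Set (S → EReal) :=
  {w | w ∈ martin A π ∧ Hflat A π w w = 0}

/-- The maximal circuit mean `ρ(A)`. -/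
def maxCircuitMean (A : S → S → EReal) : EReal :=
  ⨆ (k : ℕ) (_ : 1 ≤ k) (p : ℕ → S) (_ : p k = p 0),
    (((k : ℝ)⁻¹ : ℝ) : EReal) * pathWeight A p k

/-- `α`-almost-geodesic with respect to the left super-harmonic vector `π`. -/
def IsAlmostGeodesic (A : S → S → EReal) (π : S → ℝ) (x : ℕ → S) : Prop :=
  ∃ α : ℝ, 0 ≤ α ∧ ∀ k : ℕ,
    (π (x k) : EReal) ≤ (α : EReal) + (π (x 0) : EReal) + pathWeight A x k

/-- The set `𝒮` of `π`-integrable super-harmonic vectors. -/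
def Sset (A : S → S → EReal) (π : S → ℝ) : Set (S → EReal) :=
  {u | (∀ i, u i ≠ ⊤) ∧ (∀ i, (⨆ j, A i j + u j) ≤ u i) ∧
    (⨆ j, ((π j : EReal) + u j)) < ⊤}

/-- The set `ℋ` of `π`-integrable harmonic vectors. -/
def Hset (A : S → S → EReal) (π : S → ℝ) : Set (S → EReal) :=
  {u | (∀ i, u i ≠ ⊤) ∧ (∀ i, (⨆ j, A i j + u j) = u i) ∧
    (⨆ j, ((π j : EReal) + u j)) < ⊤}

/-- A vector is normalised if `sup_j (π_j + u_j) = 0`. -/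
def Normalised (π : S → ℝ) (u : S → EReal) : Prop :=
  (⨆ j, ((π j : EReal) + u j)) = 0

/-- `ξ` is an extremal generator of `V`. -/
def ExtremalGen (V : Set (S → EReal)) (ξ : S → EReal) : Prop :=
  ξ ∈ V ∧ ξ ≠ (fun _ => (⊥ : EReal)) ∧
    ∀ u v, u ∈ V → v ∈ V → ξ = (fun i => u i ⊔ v i) → ξ = u ∨ ξ = v

end MaxPlus
namespace MaxPlus

/-! Let `F` be the filter of indices `j` along which `K_{·j} → w`, so that
`μ_u(w) = limsup_F (π_j + u_j)` and `w♭_i = liminf_F K♭_{ij}`. Passing to the limit in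
`A_{ik} + K_{kj} ≤ K_{ij}` shows that `w` is superharmonic, and `K♭ ≤ K` gives `w♭ ≤ w`.
Then `u = A w` is superharmonic as well and `A⁺_{jj'} + w_{j'} ≤ u_j`; letting `j'` run along `F`
against `limsup_F (π + w♭) = H♭(w, w) = 0` gives `w♭ ≤ u`, hence `limsup_F (π + u) ≥ 0`.
Finally `K_{ij} + (π_j + u_j) = A*_{ij} + u_j ≤ u_i`, and letting `j` run along `F` gives
`w_i ≤ u_i ≤ w_i`. -/

section

variable {S : Type*}

def mulVec (A : S → S → EReal) (v : S → EReal) (i : S) : EReal :=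
  ⨆ j, A i j + v j

def Superharmonic (A : S → S → EReal) (v : S → EReal) : Prop :=
  ∀ i j, A i j + v j ≤ v i

lemma _root_.EReal.iSup_add_le {ι : Sort*} {f : ι → EReal} {b c : EReal}
    (h : ∀ x, f x + b ≤ c) : (⨆ x, f x) + b ≤ c :=
  EReal.add_le_of_forall_lt fun a ha b' hb' => by
    obtain ⟨x, hx⟩ := lt_iSup_iff.1 ha
    exact (add_le_add hx.le hb'.le).trans (h x)

lemma _root_.EReal.liminf_add_limsup_le {ι : Type*} {F : Filter ι} {f g : ι → EReal} {c : EReal}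
    (h : ∀ j, f j + g j ≤ c) : liminf f F + limsup g F ≤ c := by
  rw [add_comm]
  exact EReal.le_limsup_add.trans <| limsup_le_of_le (by isBoundedDefault) <|
    Eventually.of_forall fun j => (add_comm (g j) (f j)).trans_le (h j)

lemma pathWeight_succ (A : S → S → EReal) (p : ℕ → S) (n : ℕ) :
    pathWeight A p (n + 1) = pathWeight A p n + A (p n) (p (n + 1)) :=
  Finset.sum_range_succ _ n

lemma pathWeight_succ' (A : S → S → EReal) (p : ℕ → S) (n : ℕ) :
    pathWeight A p (n + 1) = A (p 0) (p 1) + pathWeight A (fun k => p (k + 1)) n := by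
  rw [pathWeight, Finset.sum_range_succ', add_comm]
  rfl

lemma pathWeight_le_star {A : S → S → EReal} {p : ℕ → S} {n : ℕ} :
    pathWeight A p n ≤ star A (p 0) (p n) :=
  le_iSup_of_le n <| le_iSup_of_le p <| le_iSup_of_le ⟨rfl, rfl⟩ le_rfl

lemma add_star_le_plus (A : S → S → EReal) (i k j : S) : A i k + star A k j ≤ plus A i j := by
  rw [add_comm]
  refine EReal.iSup_add_le fun n => EReal.iSup_add_le fun p =>
    EReal.iSup_add_le fun ⟨hp0, hpn⟩ => ?_
  let q : ℕ → S := fun t => Nat.casesOn t i p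
  have hq : pathWeight A q (n + 1) = A i (p 0) + pathWeight A p n := pathWeight_succ' A q n
  rw [add_comm, ← hp0, ← hq]
  exact le_iSup_of_le (n + 1) <| le_iSup_of_le n.succ_pos <| le_iSup_of_le q <|
    le_iSup_of_le ⟨rfl, hpn⟩ le_rfl

lemma plus_le_star (A : S → S → EReal) (i j : S) : plus A i j ≤ star A i j :=
  iSup_le fun _ => iSup_le fun _ => iSup_le fun _ => iSup_le fun ⟨hp0, hpn⟩ =>
    hp0 ▸ hpn ▸ pathWeight_le_star

namespace Superharmonic

variable {A : S → S → EReal} {v : S → EReal}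

lemma mulVec_le (hv : Superharmonic A v) (i : S) : mulVec A v i ≤ v i :=
  iSup_le (hv i)

lemma mulVec (hv : Superharmonic A v) : Superharmonic A (mulVec A v) := fun i k =>
  (add_le_add_right (hv.mulVec_le k) _).trans (le_iSup (fun j => A i j + v j) k)

lemma pathWeight_add_le (hv : Superharmonic A v) (p : ℕ → S) (n : ℕ) :
    pathWeight A p n + v (p n) ≤ v (p 0) := by
  induction n with
  | zero => simp [pathWeight]
  | succ n ih =>
    rw [pathWeight_succ, add_assoc]
    exact (add_le_add_right (hv _ _) _).trans ih

lemma star_add_le (hv : Superharmonic A v) (i j : S) : star A i j + v j ≤ v i :=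
  EReal.iSup_add_le fun n => EReal.iSup_add_le fun p => EReal.iSup_add_le fun ⟨hp0, hpn⟩ =>
    hp0 ▸ hpn ▸ hv.pathWeight_add_le p n

lemma plus_add_le (hv : Superharmonic A v) (i j : S) :
    plus A i j + v j ≤ MaxPlus.mulVec A v i :=
  EReal.iSup_add_le fun n => EReal.iSup_add_le fun hn => EReal.iSup_add_le fun p =>
    EReal.iSup_add_le fun ⟨hp0, hpn⟩ => by
    obtain ⟨m, rfl⟩ := Nat.exists_eq_add_of_le' hn
    rw [pathWeight_succ', add_assoc, ← hp0]
    refine (add_le_add_right ?_ _).trans (le_iSup (fun k => A (p 0) k + v k) (p 1))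
    exact hpn ▸ hv.pathWeight_add_le _ m

end Superharmonic

lemma add_K_le_K (A : S → S → EReal) (π : S → ℝ) (i k j : S) :
    A i k + K A π k j ≤ K A π i j := by
  rw [K, K, sub_eq_add_neg, sub_eq_add_neg, ← add_assoc]
  exact add_le_add_left ((add_star_le_plus A i k j).trans (plus_le_star A i j)) _

def martinFilter (A : S → S → EReal) (π : S → ℝ) (w : S → EReal) : Filter S :=
  comap (fun j i => K A π i j) (𝓝 w)

variable {A : S → S → EReal} {π : S → ℝ} {w : S → EReal}

lemma mu_eq_limsup (u : S → EReal) :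
    mu A π u w = limsup (fun j => (π j : EReal) + u j) (martinFilter A π w) :=
  (((𝓝 w).basis_sets.comap _).limsup_eq_iInf_iSup).symm

lemma flat_eq_liminf (i : S) :
    flat A π w i = liminf (Kflat A π i) (martinFilter A π w) :=
  (((𝓝 w).basis_sets.comap _).liminf_eq_iSup_iInf).symm

lemma martinFilter_neBot (hw : w ∈ martin A π) : (martinFilter A π w).NeBot :=
  comap_neBot fun W hW => by
    obtain ⟨_, hzW, j, rfl⟩ := mem_closure_iff_nhds.1 hw W hW
    exact ⟨j, hzW⟩

lemma tendsto_K_martinFilter (i : S) :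
    Tendsto (K A π i) (martinFilter A π w) (𝓝 (w i)) :=
  ((continuous_apply i).tendsto w).comp tendsto_comap

lemma superharmonic_of_mem_martin (hw : w ∈ martin A π) : Superharmonic A w := by
  intro i k
  have := martinFilter_neBot hw
  have hK : Tendsto (fun j => (A i k, K A π k j)) (martinFilter A π w) (𝓝 (A i k, w k)) :=
    tendsto_const_nhds.prodMk_nhds (tendsto_K_martinFilter k)
  -- `EReal` addition is not continuous (`⊤ + ⊥ = ⊥`), but lower semicontinuity suffices.
  refine EReal.ge_of_forall_gt_iff_ge.mp fun c hc =>
    ge_of_tendsto (tendsto_K_martinFilter (A := A) (π := π) i) ?_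
  filter_upwards [hK.eventually (EReal.lowerSemicontinuous_add _ c hc)] with j hj
  exact (hj.trans_le (add_K_le_K A π i k j)).le

lemma flat_le_of_mem_martin (hw : w ∈ martin A π) (i : S) : flat A π w i ≤ w i := by
  have := martinFilter_neBot hw
  calc flat A π w i = liminf (Kflat A π i) (martinFilter A π w) := flat_eq_liminf i
    _ ≤ liminf (K A π i) (martinFilter A π w) := liminf_le_liminf <| Eventually.of_forall
        fun j => EReal.sub_le_sub (plus_le_star A i j) le_rfl
    _ = w i := (tendsto_K_martinFilter i).liminf_eq

lemma limsup_add_flat_eq_zero (hw : w ∈ martinMin A π) :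
    limsup (fun j => (π j : EReal) + flat A π w j) (martinFilter A π w) = 0 := by
  rw [← mu_eq_limsup]
  exact hw.2

lemma flat_le_mulVec_of_mem_martinMin (hw : w ∈ martinMin A π) (j : S) :
    flat A π w j ≤ mulVec A w j := by
  have := EReal.liminf_add_limsup_le (F := martinFilter A π w) (f := Kflat A π j)
    (g := fun j' => (π j' : EReal) + flat A π w j') (c := mulVec A w j) fun j' =>
    calc Kflat A π j j' + ((π j' : EReal) + flat A π w j')
        = plus A j j' + flat A π w j' := by rw [Kflat, ← add_assoc, EReal.sub_add_cancel]
      _ ≤ plus A j j' + w j' := by gcongr; exact flat_le_of_mem_martin hw.1 j'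
      _ ≤ mulVec A w j := (superharmonic_of_mem_martin hw.1).plus_add_le j j'
  rwa [← flat_eq_liminf, limsup_add_flat_eq_zero hw, add_zero] at this

end

theorem harmonic_of_mem_martinMin_general {S : Type*} (A : S → S → EReal)
    (π : S → ℝ) (w : S → EReal) (hw : w ∈ martinMin A π) :
    ∀ i, w i = ⨆ j, A i j + w j := by
  intro i
  have hsh := superharmonic_of_mem_martin hw.1
  have := martinFilter_neBot hw.1
  have hmu : 0 ≤ limsup (fun j => (π j : EReal) + mulVec A w j) (martinFilter A π w) :=
    (limsup_add_flat_eq_zero hw).symm.trans_le <| limsup_le_limsup <| Eventually.of_forall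
      fun j => add_le_add_right (flat_le_mulVec_of_mem_martinMin hw j) _
  have hK := EReal.liminf_add_limsup_le (F := martinFilter A π w) (f := K A π i)
    (g := fun j => (π j : EReal) + mulVec A w j) (c := mulVec A w i) fun j => by
    rw [K, ← add_assoc, EReal.sub_add_cancel]
    exact hsh.mulVec.star_add_le i j
  rw [(tendsto_K_martinFilter i).liminf_eq] at hK
  exact le_antisymm ((le_add_of_nonneg_right hmu).trans hK) (hsh.mulVec_le i)

/-- every element of the minimal Martin space `ℳᵐ` is harmonic. -/
theorem harmonic_of_mem_martinMin {S : Type*} (A : S → S → EReal)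
    (hA : ∀ i j, A i j ≠ ⊤) (π : S → ℝ) (hπ : LeftSuperharmonic A π)
    (w : S → EReal) (hw : w ∈ martinMin A π) :
    ∀ i, w i = ⨆ j, A i j + w j :=
  harmonic_of_mem_martinMin_general A π w hw

end MaxPlus
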